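/- Let V be a finite set, L a co-simplicial complex on V, and ω = Σ_{v∈V} f(v) dv for a function f : V → ℝ. Then ω maps the span of n-co-simplices of L into the span of (n+1)-co-simplices of L modulo cyclic paths; i.e., for any n-co-simplex v₀…v_n of L, ω(v₀…v_n) is, after discarding all elementary paths with repeated vertices, a linear combination of (n+1)-co-simplices of L. Consequently (C_n(L;ℝ), ω) is a cochain complex with ω² = 0. -/

import Mathlib

/-! Each `dv` inserts `v` into a path, so it can only enlarge the vertex set; since `L` is closed
under supersets, the surviving (repetition-free) terms of `ω(v₀…vₙ)` are co-simplices of `L`.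
For `ω² = 0`, the insertion operators anticommute: the term of `dv dw (u)` inserting `w` at
position `j` and then `v` at position `i` reappears in `dw dv (u)` with the two insertions done in
the opposite order (the later position shifted by one) and with the opposite sign. Hence
`ω² = Σ_{v,w} f(v) f(w) dv dw` equals its own negative. -/

/- The real vector space `Λ(V)` of paths on `V`: formal linear combinations of
elementary paths (finite sequences of vertices, repetitions allowed), modelled
as finitely supported functions `List V →₀ ℝ`.  The elementary `n`-paths are
the lists of length `n + 1`. -/

variable {V : Type*} [DecidableEq V]

/-- The partial derivative `∂/∂v`, defined on an elementary path
`v₀v₁…v_n` by `Σᵢ (-1)^i δ(v, vᵢ) v₀…v̂ᵢ…v_n`. -/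
noncomputable def pDeriv (v : V) : (List V →₀ ℝ) →ₗ[ℝ] (List V →₀ ℝ) :=
  Finsupp.lsum ℝ fun l => LinearMap.toSpanSingleton ℝ _
    (∑ i : Fin l.length, (if l.get i = v then ((-1 : ℝ) ^ (i : ℕ)) else 0) •
      Finsupp.single (l.eraseIdx (i : ℕ)) (1 : ℝ))

/-- The insertion operator `dv`, defined on an elementary path
`u₀u₁…u_{n-1}` by `Σᵢ (-1)^i u₀…u_{i-1} v uᵢ…u_{n-1}`. -/
noncomputable def pIns (v : V) : (List V →₀ ℝ) →ₗ[ℝ] (List V →₀ ℝ) :=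
  Finsupp.lsum ℝ fun l => LinearMap.toSpanSingleton ℝ _
    (∑ i : Fin (l.length + 1), ((-1 : ℝ) ^ (i : ℕ)) •
      Finsupp.single (l.insertIdx (i : ℕ) v) (1 : ℝ))

/-- The canonical inner product on the path space, making the elementary
paths an orthonormal basis. -/
noncomputable def pInner (f g : List V →₀ ℝ) : ℝ :=
  f.sum fun l a => a * g l
/-- The projection of the path space onto the span of the paths without
repeated vertices, discarding all cyclic elementary paths. -/
noncomputable def projNodup : (List V →₀ ℝ) →ₗ[ℝ] (List V →₀ ℝ) :=
  Finsupp.lsum ℝ fun l => LinearMap.toSpanSingleton ℝ _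
    (if l.Nodup then Finsupp.single l (1 : ℝ) else 0)

open Finset

/-- If inserting `w` at `j` and then `v` at `i` gives a list, inserting `v` at `q.2` and then `w`
at `q.1` gives the same list, where `q = swapInsertPositions (i, j)`. -/
def swapInsertPositions (p : ℕ × ℕ) : ℕ × ℕ :=
  if p.1 ≤ p.2 then (p.2 + 1, p.1) else (p.2, p.1 - 1)

lemma swapInsertPositions_of_le {i j : ℕ} (h : i ≤ j) : swapInsertPositions (i, j) = (j + 1, i) :=
  if_pos h

lemma swapInsertPositions_succ_of_le {j k : ℕ} (h : j ≤ k) :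
    swapInsertPositions (k + 1, j) = (j, k) := by
  simp [swapInsertPositions, show ¬k + 1 ≤ j by omega]

lemma swapInsertPositions_involutive : Function.Involutive swapInsertPositions := by
  rintro ⟨i, j⟩
  rcases le_or_gt i j with h | h
  · rw [swapInsertPositions_of_le h, swapInsertPositions_succ_of_le h]
  · obtain ⟨k, rfl⟩ : ∃ k, i = k + 1 := ⟨i - 1, by omega⟩
    rw [swapInsertPositions_succ_of_le (by omega), swapInsertPositions_of_le (by omega)]

lemma swapInsertPositions_mem {n : ℕ} {p : ℕ × ℕ} (hp : p ∈ range (n + 2) ×ˢ range (n + 1)) :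
    swapInsertPositions p ∈ range (n + 2) ×ˢ range (n + 1) := by
  simp only [mem_product, mem_range] at hp ⊢
  unfold swapInsertPositions
  split_ifs <;> omega

lemma neg_one_pow_swapInsertPositions {R : Type*} [Ring R] (p : ℕ × ℕ) :
    (-1 : R) ^ ((swapInsertPositions p).1 + (swapInsertPositions p).2) = -(-1) ^ (p.1 + p.2) := by
  obtain ⟨i, j⟩ := p
  rcases le_or_gt i j with h | h
  · rw [swapInsertPositions_of_le h, show j + 1 + i = i + j + 1 by omega, pow_succ, mul_neg_one]
  · obtain ⟨k, rfl⟩ : ∃ k, i = k + 1 := ⟨i - 1, by omega⟩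
    rw [swapInsertPositions_succ_of_le (by omega), show k + 1 + j = j + k + 1 by omega, pow_succ,
      mul_neg_one, neg_neg]

lemma List.insertIdx_insertIdx_eq_swapInsertPositions {α : Type*} (v w : α) (l : List α)
    {p : ℕ × ℕ} (hi : p.1 ≤ l.length + 1) (hj : p.2 ≤ l.length) :
    (l.insertIdx p.2 w).insertIdx p.1 v =
      (l.insertIdx (swapInsertPositions p).2 v).insertIdx (swapInsertPositions p).1 w := by
  obtain ⟨i, j⟩ := p
  rcases le_or_gt i j with h | h
  · rw [swapInsertPositions_of_le h]
    exact (List.insertIdx_comm v w h hj).symm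
  · obtain ⟨k, rfl⟩ : ∃ k, i = k + 1 := ⟨i - 1, by omega⟩
    rw [swapInsertPositions_succ_of_le (by omega)]
    exact List.insertIdx_comm w v (by omega) (by simpa using hi)

theorem Finset.sum_mul_self_eq_zero_of_anticommute {ι A : Type*} [Ring A] [IsAddTorsionFree A]
    (s : Finset ι) (x : ι → A) (hx : ∀ i ∈ s, ∀ j ∈ s, x i * x j + x j * x i = 0) :
    (∑ i ∈ s, x i) * ∑ i ∈ s, x i = 0 := by
  rw [← self_eq_neg, sum_mul_sum]
  nth_rewrite 2 [sum_comm]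
  simp only [← sum_neg_distrib]
  exact sum_congr rfl fun i hi => sum_congr rfl fun j hj =>
    eq_neg_of_add_eq_zero_left (hx i hi j hj)

omit [DecidableEq V] in
lemma pIns_single (v : V) (l : List V) :
    pIns v (Finsupp.single l 1) =
      ∑ i ∈ range (l.length + 1), (-1 : ℝ) ^ i • Finsupp.single (l.insertIdx i v) (1 : ℝ) := by
  rw [pIns, Finsupp.lsum_single, LinearMap.toSpanSingleton_apply_one]
  exact Fin.sum_univ_eq_sum_range (fun i => (-1 : ℝ) ^ i • Finsupp.single (l.insertIdx i v) 1) _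

omit [DecidableEq V] in
lemma pIns_pIns_single (v w : V) (l : List V) :
    pIns v (pIns w (Finsupp.single l 1)) =
      ∑ p ∈ range (l.length + 2) ×ˢ range (l.length + 1),
        (-1 : ℝ) ^ (p.1 + p.2) • Finsupp.single ((l.insertIdx p.2 w).insertIdx p.1 v) (1 : ℝ) := by
  rw [pIns_single, map_sum, sum_product_right]
  refine sum_congr rfl fun j hj => ?_
  have hlen : (l.insertIdx j w).length = l.length + 1 :=
    List.length_insertIdx_of_le_length (Nat.lt_succ_iff.mp (mem_range.mp hj)) w
  rw [map_smul, pIns_single, hlen, smul_sum]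
  exact sum_congr rfl fun i _ => by rw [smul_smul, ← pow_add, add_comm j]

omit [DecidableEq V] in
lemma pIns_anticomm (v w : V) : pIns v * pIns w + pIns w * pIns v = 0 := by
  refine Finsupp.lhom_ext' fun l => LinearMap.ext_ring ?_
  simp only [LinearMap.comp_apply, LinearMap.add_apply, Module.End.mul_apply,
    Finsupp.lsingle_apply, LinearMap.zero_apply]
  rw [pIns_pIns_single, pIns_pIns_single, add_eq_zero_iff_eq_neg, ← sum_neg_distrib]
  refine sum_nbij' swapInsertPositions swapInsertPositions (fun p hp => swapInsertPositions_mem hp)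
    (fun p hp => swapInsertPositions_mem hp) (fun p _ => swapInsertPositions_involutive p)
    (fun p _ => swapInsertPositions_involutive p) fun p hp => ?_
  simp only [mem_product, mem_range] at hp
  rw [List.insertIdx_insertIdx_eq_swapInsertPositions v w l (by omega) (by omega),
    neg_one_pow_swapInsertPositions, neg_smul, neg_neg]

/-- The paper's `C_*(L; ℝ)`. -/
noncomputable def cosimplexSpan (L : Set (Finset V)) : Submodule ℝ (List V →₀ ℝ) :=
  Submodule.span ℝ {x | ∃ m : List V, m.Nodup ∧ m.toFinset ∈ L ∧ x = Finsupp.single m 1}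

lemma projNodup_single_mem_cosimplexSpan {L : Set (Finset V)} {m : List V} (hm : m.toFinset ∈ L) :
    projNodup (Finsupp.single m 1) ∈ cosimplexSpan L := by
  rw [projNodup, Finsupp.lsum_single, LinearMap.toSpanSingleton_apply_one]
  split_ifs with h
  · exact Submodule.subset_span ⟨m, h, hm, rfl⟩
  · exact Submodule.zero_mem _

lemma projNodup_pIns_single_mem_cosimplexSpan {L : Set (Finset V)}
    (hL : ∀ σ ∈ L, ∀ τ : Finset V, σ ⊆ τ → τ ∈ L) {l : List V} (hl : l.toFinset ∈ L) (v : V) :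
    projNodup (pIns v (Finsupp.single l 1)) ∈ cosimplexSpan L := by
  rw [pIns_single, map_sum]
  refine Submodule.sum_mem _ fun i _ => ?_
  rw [map_smul]
  refine Submodule.smul_mem _ _ (projNodup_single_mem_cosimplexSpan (hL _ hl _ ?_))
  exact fun x hx => List.mem_toFinset.2 (List.subset_insertIdx l i v (List.mem_toFinset.1 hx))

theorem weighted_coboundary_cosimplicial_general
    {V : Type*} [Fintype V] [LinearOrder V] (L : Set (Finset V))
    (hL : ∀ σ ∈ L, ∀ τ : Finset V, σ ⊆ τ → τ ∈ L)
    (f : V → ℝ) :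
    (∀ l : List V, l.Chain' (· < ·) → l.toFinset ∈ L →
        projNodup ((∑ v : V, f v • pIns v) (Finsupp.single l 1)) ∈
          Submodule.span ℝ
            {x : List V →₀ ℝ |
              ∃ m : List V, m.Nodup ∧ m.toFinset ∈ L ∧
                x = Finsupp.single m 1}) ∧
    ((∑ v : V, f v • pIns v) ∘ₗ (∑ v : V, f v • pIns v) = 0) := by
  refine ⟨fun l _ hl => ?_, ?_⟩
  · simp only [LinearMap.sum_apply, LinearMap.smul_apply, map_sum, map_smul]
    exact Submodule.sum_mem _ fun v _ =>
      Submodule.smul_mem _ _ (projNodup_pIns_single_mem_cosimplexSpan hL hl v)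
  · have : IsAddTorsionFree (Module.End ℝ (List V →₀ ℝ)) := .of_isTorsionFree ℝ _
    rw [← Module.End.mul_eq_comp]
    refine sum_mul_self_eq_zero_of_anticommute (A := Module.End ℝ (List V →₀ ℝ)) _ _
      fun v _ w _ => ?_
    rw [smul_mul_smul_comm, smul_mul_smul_comm, mul_comm (f w), ← smul_add,
      pIns_anticomm, smul_zero]

/-- Let `V` be a finite linearly ordered set, `L` a
co-simplicial complex on `V` (closed under supersets), `f : V → ℝ`, and
`ω = Σ_{v ∈ V} f(v) dv`.  Then for any co-simplex of `L` (encoded by its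
strictly increasing vertex list `l`), `ω(l)`, after discarding all elementary
paths with repeated vertices, is a linear combination of elementary paths
representing co-simplices of `L` (paths without repetition whose vertex set
belongs to `L`); and `ω ∘ ω = 0`, so `(C_n(L;ℝ), ω)` is a cochain complex. -/
theorem weighted_coboundary_cosimplicial
    {V : Type*} [Fintype V] [LinearOrder V] (L : Set (Finset V))
    (hL_ne : ∀ σ ∈ L, Finset.Nonempty σ)
    (hL : ∀ σ ∈ L, ∀ τ : Finset V, σ ⊆ τ → τ ∈ L)
    (f : V → ℝ) :
    (∀ l : List V, l.Chain' (· < ·) → l.toFinset ∈ L →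
        projNodup ((∑ v : V, f v • pIns v) (Finsupp.single l 1)) ∈
          Submodule.span ℝ
            {x : List V →₀ ℝ |
              ∃ m : List V, m.Nodup ∧ m.toFinset ∈ L ∧
                x = Finsupp.single m 1}) ∧
    ((∑ v : V, f v • pIns v) ∘ₗ (∑ v : V, f v • pIns v) = 0) :=
  weighted_coboundary_cosimplicial_general L hL f
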